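/- Let q with |q| < 1 and complex a, x, z (|x| small enough for convergence, all denominators nonzero). Then ∑_{k=0}^{∞} (z; q)_k x^k = ∑_{k=0}^{∞} (1 − x z q^{2k}) ((z; q)_k / (x; q)_{k+1}) q^{k(3k−1)/2} (−1)^k (x^2 z)^k. -/

import Mathlib

/-
Write ξ(c, t) = ∑ₖ (c; q)ₖ tᵏ. Comparing coefficients gives (1 - t) ξ(c, t) = 1 - c t ξ(c, q t)
and ξ(c, t) = 1 + (1 - c) t ξ(c q, t), hence the three-term relation
(1 - t) ξ(c, t) = 1 - c t - c (1 - c) q t² ξ(c q, q t).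
Iterating it N times from (c, t) = (z, x) produces the first N terms of the right-hand side plus
the remainder a_N ξ(z q^N, x q^N), where a_N = (-x² z)^N (z; q)_N q^(N(3N-1)/2) / (x; q)_N.
Since (z; q)_N is bounded, 1 / (x; q)_N is bounded (it converges to 1 / (x; q)_∞ ≠ 0) and
q^(N(3N-1)/2) decays like q^(N²), the remainder tends to zero and the right-hand side converges
absolutely.
-/

open Finset Complex

/-- finite q-Pochhammer symbol `(x; q)_n` -/
noncomputable def qp (q x : ℂ) (n : ℕ) : ℂ := ∏ j ∈ Finset.range n, (1 - x * q ^ j)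

/-- infinite q-Pochhammer symbol `(x; q)_∞` -/
noncomputable def qpi (q x : ℂ) : ℂ := ∏' j : ℕ, (1 - x * q ^ j)

open Filter Topology

lemma pent_succ (n : ℕ) :
    (n + 1) * (3 * (n + 1) - 1) / 2 = n * (3 * n - 1) / 2 + (3 * n + 1) := by
  rcases n with _ | m
  · rfl
  · rw [show (m + 1 + 1) * (3 * (m + 1 + 1) - 1)
        = (m + 1) * (3 * (m + 1) - 1) + (3 * (m + 1) + 1) * 2 by
      rw [show 3 * (m + 1 + 1) - 1 = 3 * m + 5 by omega, show 3 * (m + 1) - 1 = 3 * m + 2 by omega]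
      ring]
    exact Nat.add_mul_div_right _ _ two_pos

lemma mul_self_le_pent (n : ℕ) : n * n ≤ n * (3 * n - 1) / 2 := by
  rw [Nat.le_div_iff_mul_le two_pos, mul_assoc]
  exact Nat.mul_le_mul_left n (by omega)

lemma hasSum_of_eq_sum_range_add {α : Type*} [AddCommGroup α] [TopologicalSpace α]
    [IsTopologicalAddGroup α] [T2Space α] {f R : ℕ → α} {S : α} (hf : Summable f)
    (hR : Tendsto R atTop (𝓝 0)) (h : ∀ N, S = ∑ n ∈ range N, f n + R N) : HasSum f S := by
  have hS : Tendsto (fun N => ∑ n ∈ range N, f n) atTop (𝓝 S) := by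
    simpa [eq_sub_of_add_eq (h _).symm] using (tendsto_const_nhds (x := S)).sub hR
  exact tendsto_nhds_unique hf.hasSum.tendsto_sum_nat hS ▸ hf.hasSum

lemma summable_pow_self_of_tendsto_zero {a : ℕ → ℝ} (h0 : ∀ n, 0 ≤ a n)
    (h : Tendsto a atTop (𝓝 0)) : Summable fun n => a n ^ n := by
  refine .of_norm_bounded_eventually_nat summable_geometric_two ?_
  filter_upwards [h.eventually (ge_mem_nhds (by norm_num : (0 : ℝ) < 1 / 2))] with n hn
  rw [norm_pow, Real.norm_of_nonneg (h0 n)]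
  exact pow_le_pow_left₀ (h0 n) hn n

lemma summable_pow_pent_mul_pow {r w : ℝ} (hr0 : 0 ≤ r) (hr : r < 1) (hw : 0 ≤ w) :
    Summable fun n : ℕ => r ^ (n * (3 * n - 1) / 2) * w ^ n := by
  refine (summable_pow_self_of_tendsto_zero (a := fun n => r ^ n * w) (fun n => by positivity) ?_)
    |>.of_nonneg_of_le (fun n => by positivity) fun n => ?_
  · simpa using (tendsto_pow_atTop_nhds_zero_of_lt_one hr0 hr).mul_const w
  · rw [mul_pow, ← pow_mul]
    exact mul_le_mul_of_nonneg_right (pow_le_pow_of_le_one hr0 hr.le (mul_self_le_pent n))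
      (by positivity)

lemma norm_mul_pow_le {q : ℂ} (hq : ‖q‖ ≤ 1) (a : ℂ) (n : ℕ) : ‖a * q ^ n‖ ≤ ‖a‖ := by
  rw [norm_mul, norm_pow]
  exact mul_le_of_le_one_right (norm_nonneg a) (pow_le_one₀ (norm_nonneg q) hq)

lemma qp_succ (q c : ℂ) (n : ℕ) : qp q c (n + 1) = qp q c n * (1 - c * q ^ n) :=
  prod_range_succ _ n

lemma qp_succ' (q c : ℂ) (n : ℕ) : qp q c (n + 1) = (1 - c) * qp q (c * q) n := by
  simp only [qp, prod_range_succ', pow_succ, pow_zero, mul_one, mul_assoc, mul_comm q]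
  exact mul_comm _ _

lemma norm_qp_le_exp {q : ℂ} (hq : ‖q‖ < 1) (c : ℂ) (n : ℕ) :
    ‖qp q c n‖ ≤ Real.exp (‖c‖ / (1 - ‖q‖)) := by
  have hq0 := norm_nonneg q
  calc ‖qp q c n‖ ≤ ∏ j ∈ range n, (1 + ‖c‖ * ‖q‖ ^ j) := by
        rw [qp, norm_prod]
        refine prod_le_prod (fun _ _ => norm_nonneg _) fun j _ => ?_
        simpa [norm_mul, norm_pow] using norm_sub_le (1 : ℂ) (c * q ^ j)
    _ ≤ Real.exp (∑ j ∈ range n, ‖c‖ * ‖q‖ ^ j) :=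
        Real.prod_one_add_le_exp_sum _ fun j => by positivity
    _ ≤ Real.exp (‖c‖ / (1 - ‖q‖)) := by
        rw [Real.exp_le_exp, ← mul_sum, div_eq_mul_inv, ← tsum_geometric_of_lt_one hq0 hq]
        gcongr
        exact (summable_geometric_of_lt_one hq0 hq).sum_le_tsum _ fun i _ => by positivity

lemma summable_norm_mul_pow {q : ℂ} (hq : ‖q‖ < 1) (c : ℂ) : Summable fun j : ℕ => ‖c * q ^ j‖ := by
  simpa [norm_mul, norm_pow] using (summable_geometric_of_lt_one (norm_nonneg q) hq).mul_left ‖c‖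

lemma tendsto_qp_qpi {q : ℂ} (hq : ‖q‖ < 1) (c : ℂ) : Tendsto (qp q c) atTop (𝓝 (qpi q c)) := by
  have h := multipliable_one_add_of_summable (f := fun j => -(c * q ^ j))
    (by simpa using summable_norm_mul_pow hq c)
  simp only [← sub_eq_add_neg] at h
  exact h.tendsto_prod_tprod_nat

lemma qpi_ne_zero {q c : ℂ} (hq : ‖q‖ < 1) (hc : ∀ m : ℕ, c * q ^ m ≠ 1) : qpi q c ≠ 0 := by
  have h := tprod_one_add_ne_zero_of_summable (f := fun j => -(c * q ^ j))
    (fun j => by simpa [← sub_eq_add_neg, sub_eq_zero] using (hc j).symm)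
    (by simpa using summable_norm_mul_pow hq c)
  simpa [qpi, ← sub_eq_add_neg] using h

lemma exists_norm_inv_qp_le {q c : ℂ} (hq : ‖q‖ < 1) (hc : ∀ m : ℕ, c * q ^ m ≠ 1) :
    ∃ M, ∀ n, ‖(qp q c n)⁻¹‖ ≤ M := by
  obtain ⟨M, hM⟩ := isBounded_iff_forall_norm_le.1 <|
    Metric.isBounded_range_of_tendsto _ ((tendsto_qp_qpi hq c).inv₀ (qpi_ne_zero hq hc))
  exact ⟨M, fun n => hM _ ⟨n, rfl⟩⟩

noncomputable def qpSeries (q c t : ℂ) : ℂ := ∑' k : ℕ, qp q c k * t ^ k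

section qpSeries

variable {q t : ℂ}

lemma summable_qp_mul_pow (hq : ‖q‖ < 1) (ht : ‖t‖ < 1) (c : ℂ) :
    Summable fun k : ℕ => qp q c k * t ^ k :=
  .of_norm_bounded ((summable_geometric_of_lt_one (norm_nonneg t) ht).mul_left _) fun k => by
    rw [norm_mul, norm_pow]
    exact mul_le_mul_of_nonneg_right (norm_qp_le_exp hq c k) (by positivity)

lemma norm_qpSeries_le (hq : ‖q‖ < 1) (ht : ‖t‖ < 1) (c : ℂ) :
    ‖qpSeries q c t‖ ≤ Real.exp (‖c‖ / (1 - ‖q‖)) / (1 - ‖t‖) := by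
  have hgeom := summable_geometric_of_lt_one (norm_nonneg t) ht
  rw [div_eq_mul_inv, ← tsum_geometric_of_lt_one (norm_nonneg t) ht, ← tsum_mul_left]
  refine tsum_of_norm_bounded (hgeom.mul_left _).hasSum fun k => ?_
  rw [norm_mul, norm_pow]
  exact mul_le_mul_of_nonneg_right (norm_qp_le_exp hq c k) (by positivity)

lemma one_sub_mul_qpSeries (hq : ‖q‖ < 1) (ht : ‖t‖ < 1) (c : ℂ) :
    (1 - t) * qpSeries q c t = 1 - c * t * qpSeries q c (q * t) := by
  have hqt : ‖q * t‖ < 1 := (norm_mul_le_of_le hq.le le_rfl).trans_lt (by simpa using ht)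
  have hF := (summable_qp_mul_pow hq ht c).hasSum
  have hshift := ((hasSum_nat_add_iff' 1).2 hF).sub (hF.mul_left t)
  have hqF := ((summable_qp_mul_pow hq hqt c).hasSum).mul_left (-(c * t))
  have hterm : (fun k : ℕ => qp q c (k + 1) * t ^ (k + 1) - t * (qp q c k * t ^ k))
      = fun k => -(c * t) * (qp q c k * (q * t) ^ k) := by
    funext k; rw [qp_succ]; ring
  rw [hterm] at hshift
  have h := hshift.unique hqF
  simp only [qpSeries, sum_range_one, qp, range_zero, prod_empty, pow_zero, mul_one] at h ⊢
  linear_combination h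

lemma qpSeries_eq_one_add (hq : ‖q‖ < 1) (ht : ‖t‖ < 1) (c : ℂ) :
    qpSeries q c t = 1 + (1 - c) * t * qpSeries q (c * q) t := by
  rw [qpSeries, (summable_qp_mul_pow hq ht c).tsum_eq_zero_add, qpSeries, ← tsum_mul_left]
  congr 1
  · simp [qp]
  · exact tsum_congr fun k => by rw [qp_succ']; ring

lemma one_sub_mul_qpSeries_eq (hq : ‖q‖ < 1) (ht : ‖t‖ < 1) (c : ℂ) :
    (1 - t) * qpSeries q c t
      = 1 - c * t - c * (1 - c) * q * t ^ 2 * qpSeries q (c * q) (q * t) := by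
  have hqt : ‖q * t‖ < 1 := (norm_mul_le_of_le hq.le le_rfl).trans_lt (by simpa using ht)
  rw [one_sub_mul_qpSeries hq ht, qpSeries_eq_one_add hq hqt]
  ring

end qpSeries

noncomputable def cubicCoeff (q x z : ℂ) (n : ℕ) : ℂ :=
  (-1) ^ n * (x ^ 2 * z) ^ n * qp q z n * q ^ (n * (3 * n - 1) / 2) / qp q x n

section cubicCoeff

variable {q x z : ℂ}

lemma one_sub_mul_cubicCoeff_succ {n : ℕ} (hxn : x * q ^ n ≠ 1) :
    (1 - x * q ^ n) * cubicCoeff q x z (n + 1)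
      = -(z * q ^ n) * (1 - z * q ^ n) * q * (x * q ^ n) ^ 2 * cubicCoeff q x z n := by
  have : 1 - x * q ^ n ≠ 0 := sub_ne_zero.2 hxn.symm
  simp only [cubicCoeff, qp_succ, pent_succ, div_eq_mul_inv, mul_inv]
  field_simp
  ring

lemma cubicCoeff_mul_qpSeries (hq : ‖q‖ < 1) (hx : ‖x‖ < 1) {n : ℕ} (hxn : x * q ^ n ≠ 1) :
    cubicCoeff q x z n * qpSeries q (z * q ^ n) (x * q ^ n)
      = (1 - x * z * q ^ (2 * n)) / (1 - x * q ^ n) * cubicCoeff q x z n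
        + cubicCoeff q x z (n + 1) * qpSeries q (z * q ^ (n + 1)) (x * q ^ (n + 1)) := by
  have h1 : 1 - x * q ^ n ≠ 0 := sub_ne_zero.2 hxn.symm
  have hstep := one_sub_mul_qpSeries_eq hq ((norm_mul_pow_le hq.le x n).trans_lt hx) (z * q ^ n)
  have hsucc := one_sub_mul_cubicCoeff_succ (z := z) hxn
  rw [show z * q ^ n * q = z * q ^ (n + 1) by ring,
    show q * (x * q ^ n) = x * q ^ (n + 1) by ring] at hstep
  apply mul_left_cancel₀ h1
  rw [mul_add, ← mul_assoc _ (_ / _), mul_div_cancel₀ _ h1,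
    ← mul_assoc _ (cubicCoeff q x z (n + 1)), hsucc]
  linear_combination cubicCoeff q x z n * hstep

lemma qpSeries_eq_sum_add (hq : ‖q‖ < 1) (hx : ‖x‖ < 1) (hxp : ∀ m : ℕ, x * q ^ m ≠ 1) (N : ℕ) :
    qpSeries q z x
      = ∑ n ∈ range N, (1 - x * z * q ^ (2 * n)) / (1 - x * q ^ n) * cubicCoeff q x z n
        + cubicCoeff q x z N * qpSeries q (z * q ^ N) (x * q ^ N) := by
  induction N with
  | zero => simp [cubicCoeff, qp]
  | succ N ih => rw [ih, cubicCoeff_mul_qpSeries hq hx (hxp N), sum_range_succ, add_assoc]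

lemma cubic_summand_eq (n : ℕ) :
    (1 - x * z * q ^ (2 * n)) * (qp q z n / qp q x (n + 1)) * q ^ (n * (3 * n - 1) / 2)
        * (-1) ^ n * (x ^ 2 * z) ^ n
      = (1 - x * z * q ^ (2 * n)) / (1 - x * q ^ n) * cubicCoeff q x z n := by
  simp only [cubicCoeff, qp_succ, div_eq_mul_inv, mul_inv]
  ring

lemma norm_cubicCoeff_le {B M : ℝ} (hB : ∀ n, ‖qp q z n‖ ≤ B) (hM : ∀ n, ‖(qp q x n)⁻¹‖ ≤ M)
    (n : ℕ) :
    ‖cubicCoeff q x z n‖ ≤ B * M * (‖q‖ ^ (n * (3 * n - 1) / 2) * (‖x‖ ^ 2 * ‖z‖) ^ n) := by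
  have hB0 : 0 ≤ B := (norm_nonneg _).trans (hB 0)
  rw [cubicCoeff, div_eq_mul_inv]
  simp only [norm_mul, norm_pow, norm_neg, norm_one, one_pow, one_mul]
  calc _ ≤ (‖x‖ ^ 2 * ‖z‖) ^ n * B * ‖q‖ ^ (n * (3 * n - 1) / 2) * M := by
        gcongr
        exacts [hB n, hM n]
    _ = _ := by ring

lemma norm_one_sub_div_one_sub_le (hq : ‖q‖ ≤ 1) (hx : ‖x‖ < 1) (a : ℂ) (m n : ℕ) :
    ‖(1 - a * q ^ m) / (1 - x * q ^ n)‖ ≤ (1 + ‖a‖) / (1 - ‖x‖) := by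
  rw [norm_div]
  refine div_le_div₀ (by positivity) ?_ (sub_pos.2 hx) ?_
  · exact (norm_sub_le _ _).trans
      (by rw [norm_one]; exact add_le_add_right (norm_mul_pow_le hq a m) 1)
  · exact (sub_le_sub_left (norm_mul_pow_le hq x n) 1).trans
      (by simpa using norm_sub_norm_le (1 : ℂ) (x * q ^ n))

lemma tendsto_cubicCoeff_mul_qpSeries (hq : ‖q‖ < 1) (hx : ‖x‖ < 1)
    (h : Tendsto (cubicCoeff q x z) atTop (𝓝 0)) :
    Tendsto (fun N => cubicCoeff q x z N * qpSeries q (z * q ^ N) (x * q ^ N)) atTop (𝓝 0) := by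
  refine h.zero_mul_isBoundedUnder_le <| isBoundedUnder_of
    ⟨Real.exp (‖z‖ / (1 - ‖q‖)) / (1 - ‖x‖), fun N => ?_⟩
  have hxN := norm_mul_pow_le hq.le x N
  have hzN := norm_mul_pow_le hq.le z N
  calc ‖qpSeries q (z * q ^ N) (x * q ^ N)‖
      ≤ Real.exp (‖z * q ^ N‖ / (1 - ‖q‖)) / (1 - ‖x * q ^ N‖) :=
        norm_qpSeries_le hq (hxN.trans_lt hx) _
    _ ≤ _ := by gcongr

end cubicCoeff

theorem stmt_11_general (q x z : ℂ) (hq : ‖q‖ < 1) (hx : ‖x‖ < 1)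
    (hxp : ∀ m : ℕ, x * q ^ m ≠ 1) :
    ∑' k : ℕ, qp q z k * x ^ k =
      ∑' k : ℕ, (1 - x * z * q ^ (2 * k)) * (qp q z k / qp q x (k + 1)) *
        q ^ (k * (3 * k - 1) / 2) * (-1) ^ k * (x ^ 2 * z) ^ k := by
  obtain ⟨B, hB⟩ : ∃ B, ∀ n, ‖qp q z n‖ ≤ B := ⟨_, norm_qp_le_exp hq z⟩
  obtain ⟨M, hM⟩ := exists_norm_inv_qp_le hq hxp
  have hg := summable_pow_pent_mul_pow (norm_nonneg q) hq (w := ‖x‖ ^ 2 * ‖z‖) (by positivity)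
  have hcoeff := norm_cubicCoeff_le hB hM
  have hsum : Summable fun n =>
      (1 - x * z * q ^ (2 * n)) / (1 - x * q ^ n) * cubicCoeff q x z n := by
    refine .of_norm_bounded (hg.mul_left ((1 + ‖x * z‖) / (1 - ‖x‖) * (B * M))) fun n => ?_
    rw [norm_mul, mul_assoc ((1 + ‖x * z‖) / (1 - ‖x‖))]
    exact mul_le_mul (norm_one_sub_div_one_sub_le hq.le hx _ _ _) (hcoeff n) (norm_nonneg _)
      (div_nonneg (by positivity) (sub_pos.2 hx).le)
  have hrem := tendsto_cubicCoeff_mul_qpSeries hq hx <| squeeze_zero_norm hcoeff <| by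
    simpa using hg.tendsto_atTop_zero.const_mul (B * M)
  exact (hasSum_of_eq_sum_range_add hsum hrem (qpSeries_eq_sum_add hq hx hxp)).tsum_eq.symm.trans
    (tsum_congr fun n => (cubic_summand_eq n).symm)

theorem stmt_11 (q a x z : ℂ) (hq : ‖q‖ < 1) (hx : ‖x‖ < 1)
    (hxp : ∀ m : ℕ, x * q ^ m ≠ 1) :
    ∑' k : ℕ, qp q z k * x ^ k =
      ∑' k : ℕ, (1 - x * z * q ^ (2 * k)) * (qp q z k / qp q x (k + 1)) *
        q ^ (k * (3 * k - 1) / 2) * (-1) ^ k * (x ^ 2 * z) ^ k :=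
  stmt_11_general q x z hq hx hxp
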